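/- Let E(x) ⊆ [0,ζ] be Borel sets indexed by x ∈ ℝ^d with λ(E(x) Δ E(x')) ≤ κ‖x − x'‖ (λ Lebesgue measure, Δ symmetric difference). Let η be a finite measure on [0,ζ] with η ≪ λ and ∫ ℓ(dη/dλ) dλ < ∞ where ℓ(v) = v log v − v + 1. Then for every M ≥ 1 and x, x' ∈ ℝ^d, |η(E(x)) − η(E(x'))| ≤ e^M·κ·‖x − x'‖ + (1/M)·∫_{[0,ζ]} ℓ(dη/dλ) dλ. -/

import Mathlib

open MeasureTheory

/-- `ℓ(x) = x log x − x + 1` (with the convention `0·log 0 = 0`). -/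
noncomputable def ell (x : ℝ) : ℝ := x * Real.log x - x + 1

/-!
Off the symmetric difference `E(x) ∆ E(x')` the two integrals cancel, so their difference is
bounded by `∫_{E(x) ∆ E(x')} f`. On that set, the Fenchel–Young inequality
`M v ≤ ℓ(v) + (e^M - 1)` for the convex conjugate pair `ℓ`, `s ↦ e^s - 1` gives the pointwise bound
`f ≤ e^M + ℓ(f) / M`, whose constant part is integrated against `λ(E(x) ∆ E(x')) ≤ κ ‖x - x'‖`.
-/

theorem ell_eq_klFun : ell = InformationTheory.klFun := by
  funext x
  rw [ell, InformationTheory.klFun_apply]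
  ring

theorem ell_nonneg {x : ℝ} (hx : 0 ≤ x) : 0 ≤ ell x :=
  ell_eq_klFun ▸ InformationTheory.klFun_nonneg hx

theorem mul_le_ell_add_exp_sub_one {v : ℝ} (hv : 0 ≤ v) (s : ℝ) :
    s * v ≤ ell v + (Real.exp s - 1) := by
  rcases hv.eq_or_lt with rfl | hv
  · simp [ell, Real.exp_nonneg]
  have gap : ell v + (Real.exp s - 1) - s * v
      = v * (Real.exp (s - Real.log v) - (s - Real.log v) - 1) := by
    rw [Real.exp_sub, Real.exp_log hv, ell]
    field_simp
    ring
  have : 0 ≤ v * (Real.exp (s - Real.log v) - (s - Real.log v) - 1) :=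
    mul_nonneg hv.le (by linarith [Real.add_one_le_exp (s - Real.log v)])
  linarith

theorem le_exp_add_ell_div {v M : ℝ} (hv : 0 ≤ v) (hM : 0 < M) :
    v ≤ Real.exp M + ell v / M := by
  have young := mul_le_ell_add_exp_sub_one hv M
  have exp_sub_one_le : Real.exp M - 1 ≤ M * Real.exp M := by
    have := mul_le_mul_of_nonneg_left (Real.one_sub_le_exp_neg M) (Real.exp_nonneg M)
    rw [← Real.exp_add, add_neg_cancel, Real.exp_zero] at this
    linarith
  rw [← sub_le_iff_le_add', le_div_iff₀ hM]
  linarith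

theorem norm_setIntegral_sub_setIntegral_le {α E : Type*} [MeasurableSpace α] {μ : Measure α}
    [NormedAddCommGroup E] [NormedSpace ℝ E] {f : α → E} {s t : Set α}
    (hs : MeasurableSet s) (ht : MeasurableSet t)
    (hfs : IntegrableOn f s μ) (hft : IntegrableOn f t μ) :
    ‖(∫ z in s, f z ∂μ) - ∫ z in t, f z ∂μ‖ ≤ ∫ z in symmDiff s t, ‖f z‖ ∂μ := by
  have cancel : (∫ z in s, f z ∂μ) - ∫ z in t, f z ∂μ
      = (∫ z in s \ t, f z ∂μ) - ∫ z in t \ s, f z ∂μ := by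
    rw [← integral_inter_add_sdiff ht hfs, ← integral_inter_add_sdiff hs hft, Set.inter_comm t s]
    abel
  rw [cancel, Set.symmDiff_def, setIntegral_union disjoint_sdiff_sdiff (ht.diff hs)
    (hfs.mono_set Set.sdiff_subset).norm (hft.mono_set Set.sdiff_subset).norm]
  exact (norm_sub_le _ _).trans (add_le_add (norm_integral_le_integral_norm _)
    (norm_integral_le_integral_norm _))

theorem setIntegral_le_exp_mul_measure_add {α : Type*} [MeasurableSpace α] {μ : Measure α}
    {f : α → ℝ} {s : Set α} (hs : MeasurableSet s) (hμs : μ s < ⊤)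
    (hf_nonneg : ∀ z ∈ s, 0 ≤ f z) (hf : IntegrableOn f s μ)
    (hℓf : IntegrableOn (fun z => ell (f z)) s μ) {M : ℝ} (hM : 0 < M) :
    ∫ z in s, f z ∂μ ≤ Real.exp M * μ.real s + (1 / M) * ∫ z in s, ell (f z) ∂μ := by
  have hconst : IntegrableOn (fun _ => Real.exp M) s μ := integrableOn_const hμs.ne
  calc ∫ z in s, f z ∂μ ≤ ∫ z in s, (Real.exp M + ell (f z) / M) ∂μ :=
        setIntegral_mono_on hf (hconst.add (hℓf.div_const M)) hs
          fun z hz => le_exp_add_ell_div (hf_nonneg z hz) hM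
    _ = Real.exp M * μ.real s + (1 / M) * ∫ z in s, ell (f z) ∂μ := by
        rw [integral_add hconst (hℓf.div_const M), setIntegral_const, integral_div, smul_eq_mul]
        ring

theorem controlled_rate_modulus_general
    {d : ℕ} (ζ κ : ℝ)
    (E : EuclideanSpace ℝ (Fin d) → Set ℝ)
    (hE_meas : ∀ x, MeasurableSet (E x))
    (hE_sub : ∀ x, E x ⊆ Set.Icc 0 ζ)
    (hE_lip : ∀ x x', (volume (symmDiff (E x) (E x'))).toReal ≤ κ * ‖x - x'‖)
    (f : ℝ → ℝ) (hf_nonneg : ∀ z, 0 ≤ f z)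
    (hf_int : IntegrableOn f (Set.Icc 0 ζ))
    (hℓf_int : IntegrableOn (fun z => ell (f z)) (Set.Icc 0 ζ))
    (M : ℝ) (hM : 1 ≤ M) (x x' : EuclideanSpace ℝ (Fin d)) :
    |(∫ z in E x, f z) - ∫ z in E x', f z|
      ≤ Real.exp M * κ * ‖x - x'‖ + (1 / M) * ∫ z in Set.Icc 0 ζ, ell (f z) := by
  set S := symmDiff (E x) (E x')
  have hS : S ⊆ Set.Icc 0 ζ :=
    Set.symmDiff_subset_union.trans (Set.union_subset (hE_sub x) (hE_sub x'))
  calc |(∫ z in E x, f z) - ∫ z in E x', f z| ≤ ∫ z in S, ‖f z‖ :=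
        norm_setIntegral_sub_setIntegral_le (hE_meas x) (hE_meas x')
          (hf_int.mono_set (hE_sub x)) (hf_int.mono_set (hE_sub x'))
    _ = ∫ z in S, f z := by simp_rw [Real.norm_of_nonneg (hf_nonneg _)]
    _ ≤ Real.exp M * volume.real S + (1 / M) * ∫ z in S, ell (f z) :=
        setIntegral_le_exp_mul_measure_add ((hE_meas x).symmDiff (hE_meas x'))
          ((measure_mono hS).trans_lt measure_Icc_lt_top) (fun z _ => hf_nonneg z)
          (hf_int.mono_set hS) (hℓf_int.mono_set hS) (by linarith)
    _ ≤ Real.exp M * (κ * ‖x - x'‖) + (1 / M) * ∫ z in Set.Icc 0 ζ, ell (f z) := by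
        gcongr
        · exact hE_lip x x'
        · exact .of_forall fun z => ell_nonneg (hf_nonneg z)
    _ = Real.exp M * κ * ‖x - x'‖ + (1 / M) * ∫ z in Set.Icc 0 ζ, ell (f z) := by ring

theorem controlled_rate_modulus
    {d : ℕ} (ζ κ : ℝ) (hζ : 0 < ζ) (hκ : 0 < κ)
    (E : EuclideanSpace ℝ (Fin d) → Set ℝ)
    (hE_meas : ∀ x, MeasurableSet (E x))
    (hE_sub : ∀ x, E x ⊆ Set.Icc 0 ζ)
    (hE_lip : ∀ x x', (volume (symmDiff (E x) (E x'))).toReal ≤ κ * ‖x - x'‖)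
    (f : ℝ → ℝ) (hf_nonneg : ∀ z, 0 ≤ f z)
    (hf_int : IntegrableOn f (Set.Icc 0 ζ))
    (hℓf_int : IntegrableOn (fun z => ell (f z)) (Set.Icc 0 ζ))
    (M : ℝ) (hM : 1 ≤ M) (x x' : EuclideanSpace ℝ (Fin d)) :
    |(∫ z in E x, f z) - ∫ z in E x', f z|
      ≤ Real.exp M * κ * ‖x - x'‖ + (1 / M) * ∫ z in Set.Icc 0 ζ, ell (f z) :=
  controlled_rate_modulus_general ζ κ E hE_meas hE_sub hE_lip f hf_nonneg hf_int hℓf_int M hM x x'
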